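/- Both the triangular prism and K_{3,3} have diameter 2, and for every K ≥ 2 and every vertex v of either graph the K-hop shortest-path-distance node configuration equals (3, 2, 0, ..., 0). Moreover, for every K ≥ 1 and every iteration l, the K-hop shortest-path-distance color refinement assigns the same color to every vertex of the triangular prism and every vertex of K_{3,3}; consequently, no K-hop message passing GNN with the shortest-path-distance kernel and constant initial node features can distinguish the triangular prism from K_{3,3}, even though the two graphs are not isomorphic. -/

import Mathlib

/-!
Both graphs are 3-regular on six vertices and any two distinct non-adjacent vertices have a
common neighbour, so both have diameter two and every vertex sees exactly 3 vertices at distance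
one, 2 at distance two and none further. With hop counts independent of the vertex and of the
graph, color refinement started from a constant coloring never separates anything: at each
round the k-hop neighbourhoods carry equally many vertices of the single current color. A GNN's
features are functions of the refinement colors, hence agree too. The two graphs are still not
isomorphic: the prism contains a triangle, `K_{3,3}` is bipartite.
-/

namespace KHopStmt14

/-- The triangular prism `K₃ □ K₂` on `Fin 6`: the triangles `{0,1,2}` and `{3,4,5}`
(equal `i/3`) joined by the perfect matching `(0,3), (1,4), (2,5)` (equal `i % 3`). -/
def prism : SimpleGraph (Fin 6) :=
  SimpleGraph.fromRel fun i j => i.val / 3 = j.val / 3 ∨ i.val % 3 = j.val % 3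

/-- The complete bipartite graph `K_{3,3}` on `Fin 6`, with parts the even and the odd
vertices. -/
def K33 : SimpleGraph (Fin 6) :=
  SimpleGraph.fromRel fun i j => i.val % 2 ≠ j.val % 2

/-- k-th hop neighbors under the shortest-path-distance kernel: vertices at graph
distance exactly `k` from `v`. -/
noncomputable def Qspd {V : Type*} [Fintype V] (G : SimpleGraph V) (v : V) (k : ℕ) :
    Finset V := by
  classical
  exact Finset.univ.filter fun u => G.Reachable v u ∧ G.dist v u = k

/-- The K-hop spd node configuration `A^{K,spd}_{v,G} = (|Q^1|, ..., |Q^K|)`. -/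
noncomputable def config {V : Type*} [Fintype V] (K : ℕ) (G : SimpleGraph V) (v : V) :
    List ℕ :=
  (List.range K).map fun i => (Qspd G v (i + 1)).card

/-- K-hop color refinement with the spd kernel: all vertices share the constant initial
color, and `c_{l+1}(v) = (c_l(v), ({{c_l(u) : u ∈ Q^{k,spd}_v}})_{k=1,…,K})`. -/
def KhopEquiv {V1 V2 : Type*} [Fintype V1] [Fintype V2] (K : ℕ)
    (G1 : SimpleGraph V1) (G2 : SimpleGraph V2) : ℕ → V1 → V2 → Prop
  | 0, _, _ => True
  | (l + 1), v, u => KhopEquiv K G1 G2 l v u ∧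
      ∀ k : ℕ, 1 ≤ k → k ≤ K →
        ∃ σ : {w // w ∈ Qspd G1 v k} ≃ {w // w ∈ Qspd G2 u k},
          ∀ w : {w // w ∈ Qspd G1 v k}, KhopEquiv K G1 G2 l w.1 (σ w).1

/-- Node features of a K-hop message passing GNN with the spd kernel and constant
initial features `h0` (arbitrary message, update and combine functions). -/
noncomputable def gnnFeat {V : Type*} [Fintype V] (K : ℕ)
    {H M : Type} (h0 : H) (MES : ℕ → ℕ → Multiset H → M)
    (UPD : ℕ → ℕ → M → H → H) (COMB : ℕ → Multiset H → H)
    (G : SimpleGraph V) : ℕ → V → H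
  | 0, _ => h0
  | (l + 1), v =>
      COMB (l + 1)
        (((List.range K).map fun k =>
            UPD (l + 1) (k + 1)
              (MES (l + 1) (k + 1)
                ((Qspd G v (k + 1)).val.map (gnnFeat K h0 MES UPD COMB G l)))
              (gnnFeat K h0 MES UPD COMB G l v) : List H) : Multiset H)

/-- Graph representation: `h_G = READOUT {{h^L_v : v ∈ V}}`. -/
noncomputable def gnnGraphRep {V : Type*} [Fintype V] (K : ℕ)
    {H M B : Type} (h0 : H) (MES : ℕ → ℕ → Multiset H → M)
    (UPD : ℕ → ℕ → M → H → H) (COMB : ℕ → Multiset H → H)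
    (READOUT : Multiset H → B) (G : SimpleGraph V) (L : ℕ) : B :=
  READOUT (Finset.univ.val.map (gnnFeat K h0 MES UPD COMB G L))

open SimpleGraph Finset

lemma dist_le_of_ediam_le {V : Type*} {G : SimpleGraph V} {n : ℕ} (hG : G.ediam ≤ n)
    (u v : V) : G.dist u v ≤ n :=
  ENat.toNat_le_of_le_natCast (edist_le_ediam.trans hG)

lemma ediam_le_two_of_forall_exists_adj_adj {V : Type*} {G : SimpleGraph V}
    (h : ∀ u v, u ≠ v → ¬G.Adj u v → ∃ w, G.Adj u w ∧ G.Adj w v) : G.ediam ≤ 2 := by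
  refine ediam_le_of_edist_le fun u v => ?_
  by_cases hclose : G.Adj u v ∨ u = v
  · exact (edist_le_one_iff_adj_or_eq.mpr hclose).trans (by decide)
  · rw [not_or] at hclose
    obtain ⟨w, huw, hwv⟩ := h u v hclose.2 hclose.1
    exact (edist_eq_two_iff.mpr
      ⟨hclose.2, hclose.1, w, G.mem_commonNeighbors.mpr ⟨huw, hwv.symm⟩⟩).le

section Hops

variable {V : Type*} [Fintype V] {G : SimpleGraph V} {v u : V}

lemma mem_Qspd {k : ℕ} : u ∈ Qspd G v k ↔ G.Reachable v u ∧ G.dist v u = k := by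
  classical
  simp [Qspd]

lemma Qspd_zero : Qspd G v 0 = {v} := by
  ext u
  rw [mem_Qspd, mem_singleton]
  constructor
  · rintro ⟨hr, h⟩
    exact (hr.dist_eq_zero_iff.mp h).symm
  · rintro rfl
    exact ⟨Reachable.refl _, dist_self⟩

lemma Qspd_one [DecidableRel G.Adj] : Qspd G v 1 = G.neighborFinset v := by
  ext u
  rw [mem_Qspd, mem_neighborFinset, dist_eq_one_iff_adj]
  exact ⟨And.right, fun h => ⟨h.reachable, h⟩⟩

lemma Qspd_eq_empty_of_ediam_le {n k : ℕ} (hG : G.ediam ≤ n) (hk : n < k) :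
    Qspd G v k = ∅ := by
  ext u
  simp only [mem_Qspd, notMem_empty, iff_false, not_and]
  intro _ h
  exact (dist_le_of_ediam_le hG v u).not_gt (h ▸ hk)

lemma Qspd_two_of_ediam_le_two [DecidableEq V] [DecidableRel G.Adj] (hG : G.ediam ≤ 2) :
    Qspd G v 2 = (insert v (G.neighborFinset v))ᶜ := by
  ext u
  have hr : G.Reachable v u := preconnected_of_ediam_ne_top (ne_top_of_le_ne_top (by decide) hG) v u
  have hle : G.dist v u ≤ 2 := dist_le_of_ediam_le hG v u
  rw [mem_Qspd, mem_compl, mem_insert, mem_neighborFinset, ← dist_eq_one_iff_adj,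
    eq_comm (a := u), ← hr.dist_eq_zero_iff]
  simp only [hr, true_and]
  omega

lemma card_Qspd_two_of_ediam_le_two [DecidableRel G.Adj] (hG : G.ediam ≤ 2) :
    #(Qspd G v 2) = Fintype.card V - (G.degree v + 1) := by
  classical
  rw [Qspd_two_of_ediam_le_two hG, card_compl, card_insert_of_notMem (by simp),
    card_neighborFinset_eq_degree]

lemma config_of_ediam_le_two [DecidableRel G.Adj] (hG : G.ediam ≤ 2) {K : ℕ} (hK : 2 ≤ K)
    (v : V) :
    config K G v =
      G.degree v :: (Fintype.card V - (G.degree v + 1)) :: List.replicate (K - 2) 0 := by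
  obtain ⟨m, rfl⟩ : ∃ m, K = 2 + m := ⟨K - 2, by omega⟩
  have hfar : ∀ i, #(Qspd G v (2 + i + 1)) = 0 := fun i => by
    rw [Qspd_eq_empty_of_ediam_le (n := 2) hG (by omega), card_empty]
  simp only [config, List.range_add, List.map_append, List.map_map, Function.comp_def, hfar,
    List.map_const', List.length_range]
  simp [List.range_succ, Qspd_one, card_Qspd_two_of_ediam_le_two hG]

lemma card_Qspd_eq_of_isRegularOfDegree {W : Type*} [Fintype W] {G' : SimpleGraph W}
    [DecidableRel G.Adj] [DecidableRel G'.Adj] {d : ℕ} (hG : G.ediam ≤ 2) (hG' : G'.ediam ≤ 2)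
    (hd : G.IsRegularOfDegree d) (hd' : G'.IsRegularOfDegree d)
    (hcard : Fintype.card V = Fintype.card W) (v : V) (w : W) (k : ℕ) :
    #(Qspd G v k) = #(Qspd G' w k) := by
  rcases k with _ | _ | _ | k
  · simp [Qspd_zero]
  · simp [Qspd_one, hd v, hd' w]
  · rw [card_Qspd_two_of_ediam_le_two hG, card_Qspd_two_of_ediam_le_two hG', hd v, hd' w, hcard]
  · rw [Qspd_eq_empty_of_ediam_le (n := 2) hG (by omega), Qspd_eq_empty_of_ediam_le (n := 2) hG' (by omega)]
    rfl

end Hops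

section Refinement

variable {V₁ V₂ : Type*} [Fintype V₁] [Fintype V₂] {K : ℕ}
  {G₁ : SimpleGraph V₁} {G₂ : SimpleGraph V₂}

lemma khopEquiv_of_card_Qspd_eq
    (h : ∀ v u k, 1 ≤ k → k ≤ K → #(Qspd G₁ v k) = #(Qspd G₂ u k)) (l : ℕ) (v : V₁) (u : V₂) :
    KhopEquiv K G₁ G₂ l v u := by
  induction l generalizing v u with
  | zero => trivial
  | succ l ih =>
    refine ⟨ih v u, fun k hk hkK => ⟨Fintype.equivOfCardEq ?_, fun _ => ih _ _⟩⟩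
    simpa only [Fintype.card_coe] using h v u k hk hkK

lemma map_val_eq_map_val_of_equiv {α β γ : Type*} {s : Finset α} {t : Finset β}
    {f : α → γ} {g : β → γ} (σ : s ≃ t) (h : ∀ x : s, f x = g (σ x)) :
    s.val.map f = t.val.map g :=
  Multiset.map_eq_map_of_bij_of_nodup f g s.nodup t.nodup (fun a ha => σ ⟨a, ha⟩)
    (fun a ha => (σ ⟨a, ha⟩).2)
    (fun _ _ _ _ he => congrArg Subtype.val (σ.injective (Subtype.ext he)))
    (fun b hb => ⟨σ.symm ⟨b, hb⟩, (σ.symm ⟨b, hb⟩).2, by simp⟩) (fun a ha => h ⟨a, ha⟩)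

variable {H M : Type} (h0 : H) (MES : ℕ → ℕ → Multiset H → M)
  (UPD : ℕ → ℕ → M → H → H) (COMB : ℕ → Multiset H → H)

lemma gnnFeat_eq_of_khopEquiv :
    ∀ {l : ℕ} {v : V₁} {u : V₂}, KhopEquiv K G₁ G₂ l v u →
      gnnFeat K h0 MES UPD COMB G₁ l v = gnnFeat K h0 MES UPD COMB G₂ l u
  | 0, _, _, _ => rfl
  | l + 1, v, u, ⟨hvu, hQ⟩ => by
    rw [gnnFeat, gnnFeat, gnnFeat_eq_of_khopEquiv hvu]
    congr 2
    refine List.map_congr_left fun k hk => ?_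
    obtain ⟨σ, hσ⟩ := hQ (k + 1) (by omega) (List.mem_range.mp hk)
    rw [map_val_eq_map_val_of_equiv σ fun w => gnnFeat_eq_of_khopEquiv (hσ w)]

lemma gnnGraphRep_eq_of_equiv {B : Type} (READOUT : Multiset H → B) {L : ℕ} (e : V₁ ≃ V₂)
    (he : ∀ v, KhopEquiv K G₁ G₂ L v (e v)) :
    gnnGraphRep K h0 MES UPD COMB READOUT G₁ L = gnnGraphRep K h0 MES UPD COMB READOUT G₂ L := by
  unfold gnnGraphRep
  rw [← Multiset.map_univ_val_equiv e, Multiset.map_map]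
  exact congrArg READOUT
    (Multiset.map_congr rfl fun v _ => gnnFeat_eq_of_khopEquiv h0 MES UPD COMB (he v))

end Refinement

instance : DecidableRel prism.Adj := fun a b =>
  decidable_of_iff _ (SimpleGraph.fromRel_adj _ a b).symm

instance : DecidableRel K33.Adj := fun a b =>
  decidable_of_iff _ (SimpleGraph.fromRel_adj _ a b).symm

lemma prism_isRegularOfDegree : prism.IsRegularOfDegree 3 := by
  intro v
  revert v
  decide

lemma K33_isRegularOfDegree : K33.IsRegularOfDegree 3 := by
  intro v
  revert v
  decide

lemma prism_ediam : prism.ediam = 2 := by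
  refine le_antisymm (ediam_le_two_of_forall_exists_adj_adj (by decide)) ?_
  calc (2 : ℕ∞) = prism.edist 0 4 :=
        (edist_eq_two_iff.mpr ⟨by decide, by decide, 1, by decide⟩).symm
    _ ≤ prism.ediam := edist_le_ediam

lemma K33_ediam : K33.ediam = 2 := by
  refine le_antisymm (ediam_le_two_of_forall_exists_adj_adj (by decide)) ?_
  calc (2 : ℕ∞) = K33.edist 0 2 :=
        (edist_eq_two_iff.mpr ⟨by decide, by decide, 1, by decide⟩).symm
    _ ≤ K33.ediam := edist_le_ediam

lemma K33_cliqueFree_three : K33.CliqueFree 3 := by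
  intro s hs
  obtain ⟨a, b, c, hab, hac, hbc, -⟩ := is3Clique_iff.mp hs
  revert a b c
  decide

lemma prism_not_cliqueFree_three : ¬prism.CliqueFree 3 :=
  fun h => h {0, 1, 2} (is3Clique_triple_iff.mpr (by decide))

/-- The prism and `K_{3,3}` both have diameter 2; for every `K ≥ 2`
every vertex of either graph has K-hop spd node configuration `(3, 2, 0, …, 0)`; K-hop
spd color refinement assigns equal colors to all vertices of the two graphs at every
iteration; consequently every K-hop message passing GNN with the spd kernel and
constant initial node features produces equal graph representations — although the two
graphs are not isomorphic. -/
theorem khop_spd_cannot_distinguish_prism_K33 :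
    prism.diam = 2 ∧ K33.diam = 2 ∧
    (∀ K : ℕ, 2 ≤ K → ∀ v : Fin 6,
      config K prism v = 3 :: 2 :: List.replicate (K - 2) 0 ∧
      config K K33 v = 3 :: 2 :: List.replicate (K - 2) 0) ∧
    (∀ K : ℕ, 1 ≤ K → ∀ (l : ℕ) (v u : Fin 6), KhopEquiv K prism K33 l v u) ∧
    (∀ (K L : ℕ) {H M B : Type} (h0 : H) (MES : ℕ → ℕ → Multiset H → M)
        (UPD : ℕ → ℕ → M → H → H) (COMB : ℕ → Multiset H → H)
        (READOUT : Multiset H → B),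
        gnnGraphRep K h0 MES UPD COMB READOUT prism L =
          gnnGraphRep K h0 MES UPD COMB READOUT K33 L) ∧
    IsEmpty (prism ≃g K33) := by
  have hP := prism_ediam.le
  have hK := K33_ediam.le
  have hequiv (K l : ℕ) (v u : Fin 6) : KhopEquiv K prism K33 l v u :=
    khopEquiv_of_card_Qspd_eq (fun v u k _ _ => card_Qspd_eq_of_isRegularOfDegree hP hK
      prism_isRegularOfDegree K33_isRegularOfDegree rfl v u k) l v u
  refine ⟨by simp [diam, prism_ediam], by simp [diam, K33_ediam],
    fun K hK2 v => ⟨?_, ?_⟩, fun K _ => hequiv K, ?_,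
    ⟨fun e => prism_not_cliqueFree_three (K33_cliqueFree_three.comap e.isContained)⟩⟩
  · simp [config_of_ediam_le_two hP hK2, prism_isRegularOfDegree v]
  · simp [config_of_ediam_le_two hK hK2, K33_isRegularOfDegree v]
  · exact fun K L _ _ _ h0 MES UPD COMB READOUT =>
      gnnGraphRep_eq_of_equiv h0 MES UPD COMB READOUT (Equiv.refl _) fun v => hequiv K L v v

end KHopStmt14
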